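/- (Theorem 3.3(3), existence) If n is a positive integer, h = −n and f ≠ n, then the vector v = e(n,0,0) + (n/(f−n))·e(n−1,1,1) satisfies A₋v = c₊v = c₋v = 0; that is, v is a singular vector at level 2n of the Verma module M(h,f). -/

import Mathlib

/-!
Verma module `M(h,f)` over the ℤ₂×ℤ₂ graded superalgebra of Rittenberg–Wyler,
realized on the space of finitely supported functions `ℕ × Fin 2 × Fin 2 →₀ ℂ`,
with basis vectors `e k μ ν`.
-/

noncomputable section

/-- Index set for the basis of the Verma module. -/
abbrev Idx : Type := ℕ × Fin 2 × Fin 2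

/-- The underlying space of the Verma module `M(h,f)`. -/
abbrev Mmod : Type := Idx →₀ ℂ

/-- The standard basis vector `e(k,μ,ν)`. -/
def e (k : ℕ) (μ ν : Fin 2) : Mmod := Finsupp.single (k, μ, ν) 1

/-- Build a linear operator on `Mmod` from its values on basis vectors. -/
def mkOp (φ : Idx → Mmod) : Mmod →ₗ[ℂ] Mmod := Finsupp.lift Mmod ℂ Idx φ

/-- The lowering operator `A₋`.
`A₋ e(k,μ,ν) = 4k(h+k+μ+ν−1)·e(k−1,μ,ν) + 4(h+f)·δ_{μ,1}δ_{ν,1}·e(k,0,0)`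
(with the convention `e(−1,μ,ν) = 0`, automatic since the coefficient vanishes at `k = 0`). -/
def Am (h f : ℂ) : Mmod →ₗ[ℂ] Mmod :=
  mkOp fun p =>
    (4 * (p.1 : ℂ) * (h + (p.1 : ℂ) + ((p.2.1 : ℕ) : ℂ) + ((p.2.2 : ℕ) : ℂ) - 1))
        • e (p.1 - 1) p.2.1 p.2.2
    + (if p.2.1 = 1 ∧ p.2.2 = 1 then (4 * (h + f)) • e p.1 0 0 else 0)

/-- The lowering operator `c₊`.
`c₊ e(k,μ,ν) = 2(h+2k+2ν−f)·δ_{μ,1}·e(k,0,ν) + (−1)^μ·2k·δ_{ν,0}·e(k−1,μ,1)`. -/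
def cp (h f : ℂ) : Mmod →ₗ[ℂ] Mmod :=
  mkOp fun p =>
    (if p.2.1 = 1 then
        (2 * (h + 2 * (p.1 : ℂ) + 2 * ((p.2.2 : ℕ) : ℂ) - f)) • e p.1 0 p.2.2 else 0)
    + (if p.2.2 = 0 then
        ((-1 : ℂ) ^ (p.2.1 : ℕ) * (2 * (p.1 : ℂ))) • e (p.1 - 1) p.2.1 1 else 0)

/-- The lowering operator `c₋`.
`c₋ e(k,μ,ν) = (−1)^μ·2(h+f)·δ_{ν,1}·e(k,μ,0) + 2k·δ_{μ,0}·e(k−1,1,ν)`. -/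
def cm (h f : ℂ) : Mmod →ₗ[ℂ] Mmod :=
  mkOp fun p =>
    (if p.2.2 = 1 then
        ((-1 : ℂ) ^ (p.2.1 : ℕ) * (2 * (h + f))) • e p.1 p.2.1 0 else 0)
    + (if p.2.1 = 0 then (2 * (p.1 : ℂ)) • e (p.1 - 1) 1 p.2.2 else 0)

/-- The raising operator `A₊`: `A₊ e(k,μ,ν) = e(k+1,μ,ν)`. -/
def Ap : Mmod →ₗ[ℂ] Mmod := mkOp fun p => e (p.1 + 1) p.2.1 p.2.2

/-- The raising operator `d₊`: `d₊ e(k,μ,ν) = δ_{μ,0}·e(k,1,ν)`. -/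
def dp : Mmod →ₗ[ℂ] Mmod := mkOp fun p => if p.2.1 = 0 then e p.1 1 p.2.2 else 0

/-- The raising operator `d₋`:
`d₋ e(k,μ,ν) = (−1)^μ·δ_{ν,0}·e(k,μ,1) + 2·δ_{μ,1}·e(k+1,0,ν)`. -/
def dm : Mmod →ₗ[ℂ] Mmod :=
  mkOp fun p =>
    (if p.2.2 = 0 then ((-1 : ℂ) ^ (p.2.1 : ℕ)) • e p.1 p.2.1 1 else 0)
    + (if p.2.1 = 1 then (2 : ℂ) • e (p.1 + 1) 0 p.2.2 else 0)

/-- The Cartan operator `N`: `N e(k,μ,ν) = (h+2k+μ+ν)·e(k,μ,ν)`. -/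
def Nop (h : ℂ) : Mmod →ₗ[ℂ] Mmod :=
  mkOp fun p =>
    (h + 2 * (p.1 : ℂ) + ((p.2.1 : ℕ) : ℂ) + ((p.2.2 : ℕ) : ℂ)) • e p.1 p.2.1 p.2.2

/-- The Cartan operator `F̃`: `F̃ e(k,μ,ν) = (f+μ−ν)·e(k,μ,ν)`. -/
def Fop (f : ℂ) : Mmod →ₗ[ℂ] Mmod :=
  mkOp fun p =>
    (f + ((p.2.1 : ℕ) : ℂ) - ((p.2.2 : ℕ) : ℂ)) • e p.1 p.2.1 p.2.2

/-- The set of basis vectors of level `m` (the level of `e(k,μ,ν)` is `2k+μ+ν`). -/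
def levelVecs (m : ℕ) : Set Mmod :=
  {v | ∃ (k : ℕ) (μ ν : Fin 2), 2 * k + (μ : ℕ) + (ν : ℕ) = m ∧ v = e k μ ν}

/-- `v` is a singular vector at level `m ≥ 1`: it is nonzero, lies in the span of the
level-`m` basis vectors, and is annihilated by `A₋`, `c₊` and `c₋`. -/
def IsSingular (h f : ℂ) (m : ℕ) (v : Mmod) : Prop :=
  1 ≤ m ∧ v ≠ 0 ∧ v ∈ Submodule.span ℂ (levelVecs m) ∧
    Am h f v = 0 ∧ cp h f v = 0 ∧ cm h f v = 0

/-!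
With `h = -n`, the vector `e(n,0,0) + c • e(n-1,1,1)` is mapped by each of `A₋`, `c₊`, `c₋` to a
multiple of a single basis vector (the `e(n-2,1,1)` term of `A₋` carries the factor `h + n = 0`),
and in all three cases that multiple vanishes exactly when `c (f - n) = n`.
-/

lemma mkOp_e (φ : Idx → Mmod) (k : ℕ) (μ ν : Fin 2) : mkOp φ (e k μ ν) = φ (k, μ, ν) := by
  simp [mkOp, e]

lemma e_add_smul_e_ne_zero {k k' : ℕ} {μ ν μ' ν' : Fin 2} (hne : (k, μ, ν) ≠ (k', μ', ν'))
    (c : ℂ) : e k μ ν + c • e k' μ' ν' ≠ 0 := by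
  intro hzero
  have hcoeff := congrArg (fun v : Mmod => v (k, μ, ν)) hzero
  simp [e, hne.symm] at hcoeff

lemma e_mem_span_levelVecs {m k : ℕ} {μ ν : Fin 2} (hm : 2 * k + μ + ν = m) :
    e k μ ν ∈ Submodule.span ℂ (levelVecs m) :=
  Submodule.subset_span ⟨k, μ, ν, hm, rfl⟩

section BasisVectors

variable (h f : ℂ) (k : ℕ)

lemma Am_e_succ_zero_zero :
    Am h f (e (k + 1) 0 0) = (4 * ((k : ℂ) + 1) * (h + k)) • e k 0 0 := by
  simp [Am, mkOp_e]
  ring_nf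

lemma Am_e_one_one :
    Am h f (e k 1 1) = (4 * (k : ℂ) * (h + k + 1)) • e (k - 1) 1 1 + (4 * (h + f)) • e k 0 0 := by
  simp [Am, mkOp_e]

lemma cp_e_succ_zero_zero : cp h f (e (k + 1) 0 0) = (2 * ((k : ℂ) + 1)) • e k 0 1 := by
  simp [cp, mkOp_e]

lemma cp_e_one_one : cp h f (e k 1 1) = (2 * (h + 2 * k + 2 - f)) • e k 0 1 := by
  simp [cp, mkOp_e]

lemma cm_e_succ_zero_zero : cm h f (e (k + 1) 0 0) = (2 * ((k : ℂ) + 1)) • e k 1 0 := by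
  simp [cm, mkOp_e]

lemma cm_e_one_one : cm h f (e k 1 1) = (-(2 * (h + f))) • e k 1 0 := by
  simp [cm, mkOp_e]

end BasisVectors

section Annihilation

variable {f c : ℂ} {k : ℕ}

lemma Am_annihilates (hc : c * (f - (k + 1)) = k + 1) :
    Am (-((k : ℂ) + 1)) f (e (k + 1) 0 0 + c • e k 1 1) = 0 := by
  rw [map_add, map_smul, Am_e_succ_zero_zero, Am_e_one_one]
  linear_combination (norm := module) (4 * hc) • e k 0 0

lemma cp_annihilates (hc : c * (f - (k + 1)) = k + 1) :
    cp (-((k : ℂ) + 1)) f (e (k + 1) 0 0 + c • e k 1 1) = 0 := by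
  rw [map_add, map_smul, cp_e_succ_zero_zero, cp_e_one_one]
  linear_combination (norm := module) (-2 * hc) • e k 0 1

lemma cm_annihilates (hc : c * (f - (k + 1)) = k + 1) :
    cm (-((k : ℂ) + 1)) f (e (k + 1) 0 0 + c • e k 1 1) = 0 := by
  rw [map_add, map_smul, cm_e_succ_zero_zero, cm_e_one_one]
  linear_combination (norm := module) (-2 * hc) • e k 1 0

end Annihilation

/-- Theorem 3.3(3), existence: if `n ≥ 1`, `h = -n` and `f ≠ n`, then the vector
`v = e(n,0,0) + (n/(f−n))·e(n−1,1,1)` is annihilated by `A₋`, `c₊`, `c₋`,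
i.e. it is a singular vector at level `2n` of `M(h,f)`. -/
theorem singular_vector_even_level (h f : ℂ) (n : ℕ) (hn : 1 ≤ n)
    (hh : h = -(n : ℂ)) (hf : f ≠ (n : ℂ)) :
    Am h f (e n 0 0 + ((n : ℂ) / (f - (n : ℂ))) • e (n - 1) 1 1) = 0 ∧
    cp h f (e n 0 0 + ((n : ℂ) / (f - (n : ℂ))) • e (n - 1) 1 1) = 0 ∧
    cm h f (e n 0 0 + ((n : ℂ) / (f - (n : ℂ))) • e (n - 1) 1 1) = 0 ∧
    IsSingular h f (2 * n) (e n 0 0 + ((n : ℂ) / (f - (n : ℂ))) • e (n - 1) 1 1) := by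
  obtain ⟨k, rfl⟩ := Nat.exists_eq_add_of_le' hn
  subst hh
  rw [Nat.add_sub_cancel]
  push_cast at hf ⊢
  have hc : ((k : ℂ) + 1) / (f - (k + 1)) * (f - (k + 1)) = k + 1 :=
    div_mul_cancel₀ _ (sub_ne_zero.mpr hf)
  have hAm := Am_annihilates hc
  have hcp := cp_annihilates hc
  have hcm := cm_annihilates hc
  have hlevel : e (k + 1) 0 0 + ((k + 1) / (f - (k + 1))) • e k 1 1 ∈
      Submodule.span ℂ (levelVecs (2 * (k + 1))) :=
    Submodule.add_mem _ (e_mem_span_levelVecs (by simp))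
      (Submodule.smul_mem _ _ (e_mem_span_levelVecs (by simp; ring)))
  exact ⟨hAm, hcp, hcm, by omega, e_add_smul_e_ne_zero (by simp) _, hlevel, hAm, hcp, hcm⟩
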